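/- arXiv:1712.01054 — 2 statements merged into one kernel-verified Lean document; each statement's English description precedes it below -/
import Mathlib

section
/- Let I_{S,s} = {f ∈ ℤ[x] : p^s divides f(n) for all integers n, and p^S divides f(0)}, where S ≥ s ≥ 0. Then I_{S,s} is an ideal of ℤ[x] and the quotient ring R_{S,s} = ℤ[x]/I_{S,s} has cardinality p^{S − s + B(s)}, where B(s) = Σ_{m=1}^{s} min{j : v_p(j!) ≥ m}. -/
open Polynomial
open scoped Nat

/-- `β p m` is the least `j` with `v_p(j!) ≥ m`. -/
noncomputable def beta (p m : ℕ) : ℕ := sInf {j : ℕ | m ≤ padicValNat p (Nat.factorial j)}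

/-- `B p s = ∑_{m=1}^s β p m`. -/
noncomputable def bigB (p s : ℕ) : ℕ := ∑ m ∈ Finset.Icc 1 s, beta p m

/-- The ideal `I_{S,s}` of polynomials all of whose values are divisible by `p^s`
and whose value at `0` is divisible by `p^S`. -/
noncomputable def IdealDiv (p S s : ℕ) : Ideal (Polynomial ℤ) where
  carrier := {f | (∀ n : ℤ, (p : ℤ) ^ s ∣ f.eval n) ∧ (p : ℤ) ^ S ∣ f.eval 0}
  zero_mem' := ⟨fun n => by simp, by simp⟩
  add_mem' := fun ha hb =>
    ⟨fun n => by simpa using dvd_add (ha.1 n) (hb.1 n), by simpa using dvd_add ha.2 hb.2⟩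
  smul_mem' := fun c f hf =>
    ⟨fun n => by simpa [smul_eq_mul] using (hf.1 n).mul_left (c.eval n),
      by simpa [smul_eq_mul] using hf.2.mul_left (c.eval 0)⟩

/-!
Write `f ∈ ℤ[X]` in the falling-factorial basis, `f = ∑ c_k x(x-1)⋯(x-k+1)`. Since
`Δᵏ f (0) = k! c_k` and `k!` divides every value of `x(x-1)⋯(x-k+1)`, all values of `f` are
divisible by `p^s` iff `p^(s - v_p(k!)) ∣ c_k` for every `k`; moreover `c_0 = f(0)`. So `I_{S,s}`
is cut out by the conditions `p^(e_k) ∣ c_k` with `e_0 = S` and `e_k = (s - v_p(k!))⁺`, and the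
quotient is `∏_k ℤ/p^(e_k)`. Counting the pairs `(k, m)` with `1 ≤ k`, `v_p(k!) < m ≤ s` by `m`
instead of by `k` gives `∑_{k≥1} e_k = ∑_{m=1}^s (β(m) - 1) = B(s) - s`.
-/

lemma pow_sub_padicValInt_dvd_of_pow_dvd_mul {p : ℕ} [Fact p.Prime] {s : ℕ} {a c : ℤ}
    (ha : a ≠ 0) (h : (p : ℤ) ^ s ∣ a * c) : (p : ℤ) ^ (s - padicValInt p a) ∣ c := by
  rcases eq_or_ne c 0 with rfl | hc
  · exact dvd_zero _
  rw [padicValInt_dvd_iff, padicValInt.mul ha hc, or_iff_right (mul_ne_zero ha hc)] at h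
  exact (padicValInt_dvd_iff _ c).2 (Or.inr (by omega))

namespace Polynomial

section Basis

variable (R : Type*) [Ring R] [IsDomain R]

noncomputable def descPochhammerSequence : Sequence R where
  elems' := descPochhammer R
  degree_eq' n := by
    rw [degree_eq_natDegree (monic_descPochhammer R n).ne_zero, descPochhammer_natDegree]

noncomputable def descPochhammerBasis : Module.Basis ℕ R R[X] :=
  (descPochhammerSequence R).basis fun n => by
    simp [descPochhammerSequence, (monic_descPochhammer R n).leadingCoeff]

lemma descPochhammerBasis_apply (n : ℕ) : descPochhammerBasis R n = descPochhammer R n :=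
  Sequence.basis_eq_self _ _ n

end Basis

section FwdDiff

variable {R : Type*} [CommRing R]

lemma fwdDiff_eval_descPochhammer_succ (j : ℕ) :
    fwdDiff 1 (fun x : R => (descPochhammer R (j + 1)).eval x) =
      ((j : R) + 1) • fun x => (descPochhammer R j).eval x := by
  funext x
  have hshift :
      (descPochhammer R (j + 1)).eval (x + 1) = (x + 1) * (descPochhammer R j).eval x := by
    simp [descPochhammer_succ_left, eval_comp]
  simp only [fwdDiff, hshift, descPochhammer_succ_eval, Pi.smul_apply, smul_eq_mul]
  ring

lemma fwdDiff_iter_eval_descPochhammer_zero (k j : ℕ) :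
    (fwdDiff 1)^[k] (fun x : R => (descPochhammer R j).eval x) 0 =
      if j = k then (k ! : R) else 0 := by
  induction k generalizing j with
  | zero => simp [descPochhammer_eval_zero]
  | succ k ih =>
    rw [Function.iterate_succ_apply]
    cases j with
    | zero =>
      have hconst : (fwdDiff (1 : R))^[k] (fun _ => (0 : R)) = fun _ => 0 :=
        Function.iterate_fixed (fwdDiff_const 1 0) k
      simp [descPochhammer_zero, fwdDiff_const, hconst]
    | succ j =>
      rw [fwdDiff_eval_descPochhammer_succ, fwdDiff_iter_const_smul, Pi.smul_apply, ih,
        smul_eq_mul]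
      split_ifs with h h' h'
      · subst h; push_cast [Nat.factorial_succ]; ring
      all_goals first | omega | simp

end FwdDiff

lemma fwdDiff_iter_eval_zero_eq_factorial_mul_repr (f : ℤ[X]) (k : ℕ) :
    (fwdDiff 1)^[k] (fun n : ℤ => f.eval n) 0 = k ! * (descPochhammerBasis ℤ).repr f k := by
  let L : ℤ[X] →ₗ[ℤ] ℤ :=
    LinearMap.proj 0 ∘ₗ (fwdDiff_aux.fwdDiffₗ ℤ ℤ 1 ^ k) ∘ₗ LinearMap.pi fun n => leval n
  have hL_apply (g : ℤ[X]) : L g = (fwdDiff 1)^[k] (fun n : ℤ => g.eval n) 0 := by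
    simp only [L, LinearMap.coe_comp, LinearMap.coe_proj, fwdDiff_aux.coe_fwdDiffₗ_pow,
      Function.comp_apply, Function.eval]
    rfl
  have hL : L = (k ! : ℤ) • (descPochhammerBasis ℤ).coord k := by
    refine (descPochhammerBasis ℤ).ext fun j => ?_
    rw [hL_apply, LinearMap.smul_apply, Module.Basis.coord_apply, Module.Basis.repr_self,
      descPochhammerBasis_apply, fwdDiff_iter_eval_descPochhammer_zero, Finsupp.single_apply]
    split_ifs <;> simp_all
  rw [← hL_apply, hL, LinearMap.smul_apply, Module.Basis.coord_apply, smul_eq_mul]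

lemma factorial_dvd_eval_descPochhammer (k : ℕ) (n : ℤ) :
    (k ! : ℤ) ∣ (descPochhammer ℤ k).eval n := by
  rw [eval_eq_smeval, Ring.descPochhammer_eq_factorial_smul_choose]
  exact ⟨Ring.choose n k, by simp⟩

theorem forall_pow_dvd_eval_iff {p : ℕ} (hp : p.Prime) (s : ℕ) (f : ℤ[X]) :
    (∀ n : ℤ, (p : ℤ) ^ s ∣ f.eval n) ↔
      ∀ k, (p : ℤ) ^ (s - padicValNat p k !) ∣ (descPochhammerBasis ℤ).repr f k := by
  have := Fact.mk hp
  constructor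
  · intro h k
    have hdiff : (p : ℤ) ^ s ∣ (fwdDiff 1)^[k] (fun n : ℤ => f.eval n) 0 := by
      rw [fwdDiff_iter_eq_sum_shift]
      exact Finset.dvd_sum fun i _ => Dvd.dvd.mul_left (h _) _
    rw [fwdDiff_iter_eval_zero_eq_factorial_mul_repr] at hdiff
    simpa using pow_sub_padicValInt_dvd_of_pow_dvd_mul (by positivity) hdiff
  · intro h n
    rw [← (descPochhammerBasis ℤ).linearCombination_repr f, Finsupp.linearCombination_apply,
      Finsupp.sum, eval_finsetSum]
    refine Finset.dvd_sum fun k _ => ?_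
    rw [descPochhammerBasis_apply, eval_smul, smul_eq_mul]
    have hfact : (p : ℤ) ^ min s (padicValNat p k !) ∣ (descPochhammer ℤ k).eval n :=
      (pow_dvd_pow _ (min_le_right _ _)).trans <|
        (Int.natCast_dvd_natCast.2 pow_padicValNat_dvd).trans <|
        by exact_mod_cast factorial_dvd_eval_descPochhammer k n
    have hsplit : (p : ℤ) ^ s =
        (p : ℤ) ^ (s - padicValNat p k !) * (p : ℤ) ^ min s (padicValNat p k !) := by
      rw [← pow_add]; congr 1; omega
    rw [hsplit]
    exact mul_dvd_mul (h k) hfact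

end Polynomial

section Beta

variable {p : ℕ}

lemma padicValNat_factorial_mono (p : ℕ) : Monotone fun k => padicValNat p k ! := by
  rcases eq_or_ne p 1 with rfl | hp
  · simp [Monotone]
  intro a b hab
  exact (padicValNat_dvd_iff_le_of_ne_one hp (Nat.factorial_ne_zero b)).1
    (pow_padicValNat_dvd.trans (Nat.factorial_dvd_factorial hab))

lemma le_padicValNat_factorial_beta (hp : p.Prime) (m : ℕ) : m ≤ padicValNat p (beta p m)! := by
  have := Fact.mk hp
  exact Nat.sInf_mem (s := {j | m ≤ padicValNat p j !})
    ⟨p * m, by simp [padicValNat_factorial_mul]⟩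

lemma beta_le_iff (hp : p.Prime) {m k : ℕ} : beta p m ≤ k ↔ m ≤ padicValNat p k ! :=
  ⟨fun h => (le_padicValNat_factorial_beta hp m).trans (padicValNat_factorial_mono p h),
    fun h => Nat.sInf_le h⟩

lemma beta_mono (hp : p.Prime) : Monotone (beta p) := fun _ _ h =>
  (beta_le_iff hp).2 (h.trans (le_padicValNat_factorial_beta hp _))

lemma sum_range_sub_padicValNat_factorial_add_self (hp : p.Prime) {s N : ℕ}
    (hN : beta p s ≤ N) :
    ∑ k ∈ Finset.range N, (s - padicValNat p (k + 1)!) + s = bigB p s := by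
  induction s with
  | zero => simp [bigB]
  | succ s ih =>
    have hstep (k : ℕ) : s + 1 - padicValNat p (k + 1)! =
        (s - padicValNat p (k + 1)!) + if padicValNat p (k + 1)! ≤ s then 1 else 0 := by
      split_ifs <;> omega
    have hcount : {k ∈ Finset.range N | padicValNat p (k + 1)! ≤ s} =
        Finset.range (beta p (s + 1) - 1) := by
      ext k
      have := (beta_le_iff hp (m := s + 1) (k := k + 1)).not
      simp only [Finset.mem_filter, Finset.mem_range]
      omega
    have hpos : 1 ≤ beta p (s + 1) := by
      by_contra h0
      have := (beta_le_iff hp (m := s + 1) (k := 0)).1 (by omega)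
      simp at this
    rw [Finset.sum_congr rfl fun k _ => hstep k, Finset.sum_add_distrib, ← Finset.card_filter,
      hcount, Finset.card_range, bigB, Finset.sum_Icc_succ_top (by omega), ← bigB,
      ← ih ((beta_mono hp (Nat.le_succ s)).trans hN)]
    omega

end Beta

theorem Module.Basis.card_quotient_eq_prod {ι M : Type*} [AddCommGroup M] (b : Basis ι ℤ M)
    (t : Finset ι) (d : ι → ℕ) (hd : ∀ i ∉ t, d i = 1) (N : AddSubgroup M)
    (hN : ∀ x, x ∈ N ↔ ∀ i, (d i : ℤ) ∣ b.repr x i) :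
    Nat.card (M ⧸ N) = ∏ i ∈ t, d i := by
  let T : M →+ ((i : t) → ZMod (d i)) :=
    AddMonoidHom.pi fun i => (Int.castAddHom (ZMod (d i))).comp (b.coord i).toAddMonoidHom
  have hT (x : M) (i : t) : T x i = (b.repr x i : ZMod (d i)) := rfl
  have hsurj : Function.Surjective T := by
    intro z
    choose w hw using fun i : t => ZMod.intCast_surjective (z i)
    refine ⟨b.repr.symm (Finsupp.indicator t fun i hi => w ⟨i, hi⟩), funext fun i => ?_⟩
    rw [hT, LinearEquiv.apply_symm_apply, Finsupp.indicator_of_mem i.2, hw]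
  have hker : N = T.ker := by
    ext x
    rw [hN, AddMonoidHom.mem_ker, funext_iff]
    simp only [hT, Pi.zero_apply, ZMod.intCast_zmod_eq_zero_iff_dvd]
    refine ⟨fun h i => h i, fun h i => ?_⟩
    by_cases hi : i ∈ t
    · exact h ⟨i, hi⟩
    · simp [hd i hi]
  subst hker
  rw [Nat.card_congr (QuotientAddGroup.quotientKerEquivOfSurjective T hsurj).toEquiv,
    Nat.card_pi, Finset.prod_coe_sort t fun i => Nat.card (ZMod (d i))]
  simp only [Nat.card_zmod]

def idealDivExponent (p S s k : ℕ) : ℕ := if k = 0 then S else s - padicValNat p k !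

lemma mem_IdealDiv_iff {p S s : ℕ} (hp : p.Prime) (hSs : s ≤ S) (f : ℤ[X]) :
    f ∈ IdealDiv p S s ↔
      ∀ k, (p : ℤ) ^ idealDivExponent p S s k ∣ (descPochhammerBasis ℤ).repr f k := by
  have heval_zero : f.eval 0 = (descPochhammerBasis ℤ).repr f 0 := by
    simpa using fwdDiff_iter_eval_zero_eq_factorial_mul_repr f 0
  have hS : (p : ℤ) ^ (s - padicValNat p 0 !) ∣ (p : ℤ) ^ S :=
    pow_dvd_pow _ (by simpa using hSs)
  change (∀ n : ℤ, _) ∧ _ ↔ _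
  rw [forall_pow_dvd_eval_iff hp, heval_zero]
  constructor
  · rintro ⟨hvals, hzero⟩ (_ | k)
    exacts [hzero, hvals (k + 1)]
  · intro h
    refine ⟨fun k => ?_, h 0⟩
    rcases k with _ | k
    exacts [hS.trans (h 0), h (k + 1)]

lemma sum_idealDivExponent {p S s : ℕ} (hp : p.Prime) (hSs : s ≤ S) :
    ∑ k ∈ Finset.range (beta p s + 1), idealDivExponent p S s k = S - s + bigB p s := by
  rw [Finset.sum_range_succ', ← sum_range_sub_padicValNat_factorial_add_self hp le_rfl]
  simp only [idealDivExponent, Nat.succ_ne_zero, if_false, if_true]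
  omega

lemma idealDivExponent_eq_zero {p S s k : ℕ} (hp : p.Prime) (hk : beta p s < k) :
    idealDivExponent p S s k = 0 := by
  have := (beta_le_iff hp).1 hk.le
  simp only [idealDivExponent, Nat.pos_iff_ne_zero.1 (Nat.zero_lt_of_lt hk), if_false]
  omega

theorem card_quotient_IdealDiv (p S s : ℕ) (hp : p.Prime) (hSs : s ≤ S) :
    Nat.card (Polynomial ℤ ⧸ IdealDiv p S s) = p ^ (S - s + bigB p s) := by
  have hcard := (descPochhammerBasis ℤ).card_quotient_eq_prod (Finset.range (beta p s + 1))
    (fun k => p ^ idealDivExponent p S s k)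
    (fun k hk => by simp [idealDivExponent_eq_zero hp (by simpa using hk)])
    (IdealDiv p S s).toAddSubgroup (by simpa using mem_IdealDiv_iff hp hSs)
  change Nat.card (ℤ[X] ⧸ (IdealDiv p S s).toAddSubgroup) = _
  rw [hcard, Finset.prod_pow_eq_pow_sum, sum_idealDivExponent hp hSs]
end

section
/- For a prime p and integer s ≥ 0, let f(x) = ∏_{j=0}^{β(s)−1} (x − j) and g(x) = p^s + ∏_{i=0}^{p−1} (x − i)^{s+1}, where β(s) = min{j : v_p(j!) ≥ s}. Then v_p(gcd(f(n), g(n))) = s for every integer n, and the resultant r of f and g satisfies v_p(r) = s·β(s). -/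
/-!
Among any `p` consecutive integers one is divisible by `p`, so the product in `g(n)` is
divisible by `p ^ (s + 1)` and `g(n)` has `p`-adic valuation exactly `s`. On the other side
`f(n)` is a product of `β(s)` consecutive integers, hence divisible by `β(s)!` and so by `p ^ s`.
Finally `f` is monic with the roots `0, …, β(s) - 1`, so `Res(f, g) = ∏_{j < β(s)} g(j)`,
whose valuation is `s * β(s)`.
-/

open Polynomial

/-- The Sylvester matrix of two polynomials over `ℤ`. -/
def sylvester (f g : Polynomial ℤ) :
    Matrix (Fin (g.natDegree + f.natDegree)) (Fin (g.natDegree + f.natDegree)) ℤ :=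
  Matrix.of fun i j =>
    if (i : ℕ) < g.natDegree then
      if (j : ℕ) ≤ (i : ℕ) + f.natDegree then f.coeff (f.natDegree + i - j) else 0
    else
      if (j : ℕ) ≤ ((i : ℕ) - g.natDegree) + g.natDegree then
        g.coeff (g.natDegree + ((i : ℕ) - g.natDegree) - j) else 0

/-- The resultant of two polynomials, as the determinant of the Sylvester matrix. -/
def resultant (f g : Polynomial ℤ) : ℤ := (_root_.sylvester f g).det

open scoped Nat

theorem Int.factorial_dvd_prod_range_sub (k : ℕ) (x : ℤ) :
    (k ! : ℤ) ∣ ∏ j ∈ Finset.range k, (x - j) := by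
  rw [← descPochhammer_eval_eq_prod_range, eval_eq_smeval,
    Ring.descPochhammer_eq_factorial_smul_choose, nsmul_eq_mul]
  exact dvd_mul_right _ _

theorem Int.pow_dvd_prod_range_sub_pow {k : ℕ} (hk : 0 < k) (m : ℕ) (x : ℤ) :
    (k : ℤ) ^ m ∣ ∏ j ∈ Finset.range k, (x - j) ^ m := by
  rw [Finset.prod_pow]
  exact pow_dvd_pow_of_dvd ((Int.natCast_dvd_natCast.2 (Nat.dvd_factorial hk le_rfl)).trans
    (Int.factorial_dvd_prod_range_sub k x)) m

theorem padicValInt_prod {p : ℕ} [Fact p.Prime] {ι : Type*} (s : Finset ι) (a : ι → ℤ)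
    (ha : ∀ i ∈ s, a i ≠ 0) :
    padicValInt p (∏ i ∈ s, a i) = ∑ i ∈ s, padicValInt p (a i) := by
  classical
  induction s using Finset.induction_on with
  | empty => simp
  | insert j s hj ih =>
    have hs : ∀ i ∈ s, a i ≠ 0 := fun i hi => ha i (Finset.mem_insert_of_mem hi)
    rw [Finset.prod_insert hj, Finset.sum_insert hj,
      padicValInt.mul (ha j (Finset.mem_insert_self j s)) (Finset.prod_ne_zero_iff.2 hs), ih hs]

theorem Nat.Prime.not_dvd_one_add_mul {p : ℕ} (hp : p.Prime) (b : ℤ) :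
    ¬ (p : ℤ) ∣ 1 + p * b := by
  rw [dvd_add_left (dvd_mul_right (p : ℤ) b)]
  exact mod_cast hp.not_dvd_one

theorem pow_add_ne_zero_of_pow_succ_dvd {p : ℕ} (hp : p.Prime) (s : ℕ) {a : ℤ}
    (ha : (p : ℤ) ^ (s + 1) ∣ a) : (p : ℤ) ^ s + a ≠ 0 := by
  obtain ⟨b, rfl⟩ := ha
  rw [show (p : ℤ) ^ s + p ^ (s + 1) * b = p ^ s * (1 + p * b) by ring]
  exact mul_ne_zero (pow_ne_zero _ (mod_cast hp.ne_zero))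
    (by rintro h; simpa [h] using hp.not_dvd_one_add_mul b)

theorem padicValInt_pow_add_of_pow_succ_dvd {p : ℕ} [hp : Fact p.Prime] (s : ℕ) {a : ℤ}
    (ha : (p : ℤ) ^ (s + 1) ∣ a) : padicValInt p ((p : ℤ) ^ s + a) = s := by
  obtain ⟨b, rfl⟩ := ha
  have hb : ¬ (p : ℤ) ∣ 1 + p * b := hp.out.not_dvd_one_add_mul b
  rw [show (p : ℤ) ^ s + p ^ (s + 1) * b = p ^ s * (1 + p * b) by ring,
    padicValInt.mul (pow_ne_zero _ (mod_cast hp.out.ne_zero)) (by rintro h; simp [h] at hb),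
    padicValInt.eq_zero_of_not_dvd hb, add_zero, ← Nat.cast_pow, padicValInt.of_nat,
    padicValNat.prime_pow]

theorem padicValNat_gcd_of_pow_dvd {p : ℕ} [hp : Fact p.Prime] {s : ℕ} {a b : ℤ}
    (ha : (p : ℤ) ^ s ∣ a) (hb0 : b ≠ 0) (hb : padicValInt p b = s) :
    padicValNat p (Int.gcd a b) = s := by
  have hgcd : Int.gcd a b ≠ 0 := fun h => hb0 (Int.gcd_eq_zero_iff.1 h).2
  refine le_antisymm ?_ ?_
  · rw [← hb, padicValInt, ← padicValNat_dvd_iff_le (Int.natAbs_ne_zero.2 hb0)]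
    exact pow_padicValNat_dvd.trans (Int.gcd_dvd_natAbs_right a b)
  · rw [← padicValNat_dvd_iff_le hgcd, ← Int.natCast_dvd_natCast, Nat.cast_pow]
    exact_mod_cast Int.dvd_gcd ha ((padicValInt_dvd_iff s b).2 (Or.inr hb.ge))

theorem pow_dvd_factorial_beta {p : ℕ} [Fact p.Prime] (s : ℕ) : p ^ s ∣ (beta p s)! := by
  have hmem : s ≤ padicValNat p (beta p s)! := Nat.sInf_mem (s := {j | s ≤ padicValNat p j !})
    ⟨p * s, by simp [padicValNat_factorial_mul]⟩
  exact (pow_dvd_pow p hmem).trans pow_padicValNat_dvd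

theorem Polynomial.resultant_prod_X_sub_C_left {R ι : Type*} [CommRing R] [Nontrivial R]
    (s : Finset ι) (c : ι → R) (g : R[X]) :
    (∏ i ∈ s, (X - C (c i))).resultant g = ∏ i ∈ s, g.eval (c i) := by
  rw [Polynomial.resultant, ← Polynomial.resultant, resultant_prod_left _ _ _ _ (by simp) le_rfl]
  refine Finset.prod_congr rfl fun i _ => ?_
  rw [natDegree_X_sub_C, resultant_X_sub_C_left _ _ _ le_rfl]

theorem sylvester_eq_submatrix_transpose (f g : ℤ[X]) :
    _root_.sylvester f g =
      (Polynomial.sylvester f g f.natDegree g.natDegree).transpose.submatrix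
        ((finCongr (add_comm _ _)).trans Fin.revPerm)
        ((finCongr (add_comm _ _)).trans Fin.revPerm) := by
  ext i j
  have hi := i.isLt
  have hj := j.isLt
  simp only [_root_.sylvester, Polynomial.sylvester, Matrix.of_apply, Matrix.submatrix_apply,
    Matrix.transpose_apply, Equiv.trans_apply, finCongr_apply, Fin.revPerm_apply, Fin.addCases,
    Fin.val_rev, Fin.val_cast, Fin.val_castLT, Fin.val_subNat, Set.mem_Icc, eq_rec_constant]
  -- In every case the two entries are coefficients with the same index, or both zero, or one is
  -- zero and the other a coefficient above the degree.
  split_ifs <;> first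
    | rfl
    | omega
    | (congr 1; omega)
    | (apply coeff_eq_zero_of_natDegree_lt; omega)

theorem resultant_eq_polynomial_resultant (f g : ℤ[X]) :
    _root_.resultant f g = f.resultant g := by
  rw [_root_.resultant, sylvester_eq_submatrix_transpose, Matrix.det_submatrix_equiv_self,
    Matrix.det_transpose, Polynomial.resultant]

theorem construction_large_s (p : ℕ) (hp : p.Prime) (s : ℕ) (f g : Polynomial ℤ)
    (hfdef : f = ∏ j ∈ Finset.range (beta p s), (X - C (j : ℤ)))
    (hgdef : g = C ((p : ℤ) ^ s) + ∏ i ∈ Finset.range p, (X - C (i : ℤ)) ^ (s + 1)) :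
    (∀ n : ℤ, padicValNat p (Int.gcd (f.eval n) (g.eval n)) = s) ∧
      padicValInt p (_root_.resultant f g) = s * beta p s := by
  have := Fact.mk hp
  have hfeval : ∀ n : ℤ, (p : ℤ) ^ s ∣ f.eval n := fun n => by
    rw [hfdef, eval_prod]
    simp only [eval_sub, eval_X, eval_C]
    exact (Int.natCast_dvd_natCast.2 (pow_dvd_factorial_beta s)).trans
      (mod_cast Int.factorial_dvd_prod_range_sub _ n)
  have hgeval (n : ℤ) :
      g.eval n = (p : ℤ) ^ s + ∏ i ∈ Finset.range p, (n - i) ^ (s + 1) := by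
    simp [hgdef, eval_prod]
  have hdvd : ∀ n : ℤ, (p : ℤ) ^ (s + 1) ∣ ∏ i ∈ Finset.range p, (n - i) ^ (s + 1) :=
    Int.pow_dvd_prod_range_sub_pow hp.pos (s + 1)
  have hg0 : ∀ n : ℤ, g.eval n ≠ 0 := fun n =>
    hgeval n ▸ pow_add_ne_zero_of_pow_succ_dvd hp s (hdvd n)
  have hgval : ∀ n : ℤ, padicValInt p (g.eval n) = s := fun n =>
    hgeval n ▸ padicValInt_pow_add_of_pow_succ_dvd s (hdvd n)
  refine ⟨fun n => padicValNat_gcd_of_pow_dvd (hfeval n) (hg0 n) (hgval n), ?_⟩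
  rw [resultant_eq_polynomial_resultant, hfdef, resultant_prod_X_sub_C_left,
    padicValInt_prod _ (fun j : ℕ => g.eval (j : ℤ)) fun j _ => hg0 j,
    Finset.sum_const_nat fun (j : ℕ) _ => hgval j, Finset.card_range, mul_comm]
end
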